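/- For any partition p of Fin n (n ≥ 1), there exists a partition q of Fin n with p ⊥ q. Consequently, for every partition p the set {p}⊥ is nonempty. -/

import Mathlib

/-- A multigraph with vertex type `V` and edge-index type `E`:
each edge has an ordered pair of endpoints. -/
structure Multigraph (V : Type*) (E : Type*) where
  ends : E → V × V

namespace Multigraph

variable {V E : Type*}

/-- A walk in a multigraph, traversing edges in either direction. -/
inductive Walk (G : Multigraph V E) : V → V → Type _
  | nil (v : V) : Walk G v v
  | cons {u v w : V} (e : E)
      (h : G.ends e = (u, v) ∨ G.ends e = (v, u)) (p : Walk G v w) : Walk G u w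

/-- The list of edges used by a walk. -/
def Walk.edges {G : Multigraph V E} : ∀ {u v : V}, G.Walk u v → List E
  | _, _, .nil _ => []
  | _, _, .cons e _ p => e :: p.edges

/-- A multigraph is connected if any two vertices are joined by a walk. -/
def Connected (G : Multigraph V E) : Prop := ∀ u v : V, Nonempty (G.Walk u v)

/-- A multigraph is acyclic if it has no closed trail of positive length
(equivalently, no cycle). -/
def Acyclic (G : Multigraph V E) : Prop :=
  ∀ (v : V) (w : G.Walk v v), w.edges.Nodup → w.edges = []

/-- A multigraph is a tree if it is acyclic and connected. -/
def IsTree (G : Multigraph V E) : Prop := G.Acyclic ∧ G.Connected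

end Multigraph

/-- The meeting graph of two partitions (setoids) of `Fin n`: vertices are
the blocks of `p` together with the blocks of `q`, and for each `i : Fin n`
there is one edge joining the `p`-block of `i` to the `q`-block of `i`. -/
def meetingGraph {n : ℕ} (p q : Setoid (Fin n)) :
    Multigraph (Quotient p ⊕ Quotient q) (Fin n) :=
  ⟨fun i => (Sum.inl (Quotient.mk p i), Sum.inr (Quotient.mk q i))⟩

/-- Two partitions are orthogonal when their meeting graph is a tree
(acyclic and connected). -/
def Orthogonal {n : ℕ} (p q : Setoid (Fin n)) : Prop :=
  (meetingGraph p q).IsTree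

/-- The number of blocks of a partition. -/
noncomputable def numBlocks {n : ℕ} (p : Setoid (Fin n)) : ℕ := Nat.card (Quotient p)

/-- The dual `P⊥` of a set of partitions. -/
def orthSet {n : ℕ} (P : Set (Setoid (Fin n))) : Set (Setoid (Fin n)) :=
  {q | ∀ p ∈ P, Orthogonal q p}

/-! Let `q` have the chosen representatives of the blocks of `p` as one block and singletons
elsewhere. The meeting graph of `p` and `q` is then a tree of depth two rooted at the block of
representatives: every block `C` of `p` hangs from the root by the edge `C.out`, and every other
element `x` is a leaf `{x}` hanging from its `p`-block. Orthogonality is symmetric, so `q`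
also lies in `{p}⊥`. -/

namespace Multigraph

variable {V V' E : Type*} {G : Multigraph V E} {G' : Multigraph V' E}

def Joins (G : Multigraph V E) (e : E) (u v : V) : Prop :=
  G.ends e = (u, v) ∨ G.ends e = (v, u)

theorem Joins.symm {e : E} {u v : V} (h : G.Joins e u v) : G.Joins e v u := Or.symm h

namespace Walk

def append : ∀ {u v w : V}, G.Walk u v → G.Walk v w → G.Walk u w
  | _, _, _, nil _, q => q
  | _, _, _, cons e h p, q => cons e h (p.append q)

theorem edges_append : ∀ {u v w : V} (p : G.Walk u v) (q : G.Walk v w),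
    (p.append q).edges = p.edges ++ q.edges
  | _, _, _, nil _, _ => rfl
  | _, _, _, cons e _ p, q => congrArg (e :: ·) (edges_append p q)

def reverse : ∀ {u v : V}, G.Walk u v → G.Walk v u
  | _, _, nil v => nil v
  | _, _, cons e h p => p.reverse.append (cons e (Joins.symm h) (nil _))

theorem edges_reverse : ∀ {u v : V} (p : G.Walk u v), p.reverse.edges = p.edges.reverse
  | _, _, nil _ => rfl
  | _, _, cons e _ p => by simp [reverse, edges_append, edges, edges_reverse p]

theorem mem_edges_reverse {u v : V} {p : G.Walk u v} {e : E} :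
    e ∈ p.reverse.edges ↔ e ∈ p.edges := by
  rw [edges_reverse, List.mem_reverse]

def map (f : V → V') (hf : ∀ e u v, G.Joins e u v → G'.Joins e (f u) (f v)) :
    ∀ {u v : V}, G.Walk u v → G'.Walk (f u) (f v)
  | _, _, nil v => nil (f v)
  | _, _, cons e h p => cons e (hf e _ _ h) (p.map f hf)

theorem edges_map (f : V → V') (hf : ∀ e u v, G.Joins e u v → G'.Joins e (f u) (f v)) :
    ∀ {u v : V} (p : G.Walk u v), (p.map f hf).edges = p.edges
  | _, _, nil _ => rfl
  | _, _, cons e _ p => congrArg (e :: ·) (edges_map f hf p)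

theorem mem_edges_of_forall_joins_eq {u v : V} {e : E}
    (hu : ∀ e' x, G.Joins e' u x → e' = e) (p : G.Walk u v) (huv : u ≠ v) :
    e ∈ p.edges := by
  cases p with
  | nil => exact absurd rfl huv
  | cons e' h _ => exact hu e' _ h ▸ List.mem_cons_self

end Walk

theorem connected_of_forall_walk_to (r : V) (h : ∀ v, Nonempty (G.Walk v r)) :
    G.Connected := fun u v =>
  let ⟨p⟩ := h u
  let ⟨q⟩ := h v
  ⟨p.append q.reverse⟩

theorem acyclic_of_forall_mem_edges
    (h : ∀ e u v, G.ends e = (u, v) → ∀ p : G.Walk u v, e ∈ p.edges) : G.Acyclic := by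
  rintro v (_ | ⟨e, he, p⟩) hnodup
  · rfl
  have he_notMem : e ∉ p.edges := (List.nodup_cons.mp hnodup).1
  exfalso
  rcases he with he | he
  · exact he_notMem (Walk.mem_edges_reverse.mp (h e _ _ he p.reverse))
  · exact he_notMem (h e _ _ he p)

theorem IsTree.of_equiv (φ : V ≃ V')
    (hφ : ∀ e u v, G'.Joins e (φ u) (φ v) ↔ G.Joins e u v) (hG : G.IsTree) : G'.IsTree := by
  have hφ_symm : ∀ e u v, G'.Joins e u v → G.Joins e (φ.symm u) (φ.symm v) := by
    intro e u v h
    rwa [← hφ, φ.apply_symm_apply, φ.apply_symm_apply]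
  refine ⟨fun v p hp => ?_, fun u v => ?_⟩
  · rw [← Walk.edges_map _ hφ_symm p] at hp ⊢
    exact hG.1 _ _ hp
  · obtain ⟨p⟩ := hG.2 (φ.symm u) (φ.symm v)
    simpa using Nonempty.intro (p.map φ fun e u v => (hφ e u v).mpr)

end Multigraph

open Multigraph

section MeetingGraph

variable {n : ℕ} {p q : Setoid (Fin n)} {e : Fin n}

theorem meetingGraph_joins_inl {C : Quotient p} {v : Quotient p ⊕ Quotient q} :
    (meetingGraph p q).Joins e (.inl C) v ↔
      Quotient.mk p e = C ∧ v = .inr (Quotient.mk q e) := by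
  simp [Joins, meetingGraph, eq_comm]

theorem meetingGraph_joins_inr {D : Quotient q} {v : Quotient p ⊕ Quotient q} :
    (meetingGraph p q).Joins e (.inr D) v ↔
      Quotient.mk q e = D ∧ v = .inl (Quotient.mk p e) := by
  simp [Joins, meetingGraph, eq_comm, and_comm]

theorem meetingGraph_joins_swap {u v : Quotient p ⊕ Quotient q} :
    (meetingGraph q p).Joins e u.swap v.swap ↔ (meetingGraph p q).Joins e u v := by
  cases u <;> cases v <;> simp [Joins, meetingGraph, and_comm]

theorem Orthogonal.symm (h : Orthogonal p q) : Orthogonal q p :=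
  IsTree.of_equiv (Equiv.sumComm _ _) (fun _ _ _ => meetingGraph_joins_swap) h

end MeetingGraph

namespace Setoid

variable {α : Type*} (p : Setoid α)

def IsRep (x : α) : Prop := (Quotient.mk p x).out = x

theorem isRep_out (C : Quotient p) : p.IsRep C.out := by
  rw [IsRep, Quotient.out_eq]

def transversalPartition : Setoid α where
  r x y := x = y ∨ (p.IsRep x ∧ p.IsRep y)
  iseqv :=
    { refl := fun _ => .inl rfl
      symm := fun
        | .inl h => .inl h.symm
        | .inr h => .inr h.symm
      trans := fun
        | .inl rfl, h => h
        | .inr h, .inl rfl => .inr h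
        | .inr h, .inr h' => .inr ⟨h.1, h'.2⟩ }

variable {p}

theorem transversalPartition_rel_of_isRep {x y : α} (hx : p.IsRep x) (hy : p.IsRep y) :
    p.transversalPartition x y :=
  .inr ⟨hx, hy⟩

theorem transversalPartition_rel_iff_eq {x y : α} (hy : ¬p.IsRep y) :
    p.transversalPartition x y ↔ x = y :=
  ⟨fun h => h.resolve_right fun h' => hy h'.2, .inl⟩

end Setoid

section Construction

open Setoid

variable {n : ℕ} {p : Setoid (Fin n)}

local notation "G" p => meetingGraph p (Setoid.transversalPartition p)

/-- Walking from a block `C` of `p` to the block of representatives, every detour through a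
singleton `{x}` returns to the block of `x`, so the walk must eventually take the edge `C.out`. -/
theorem out_mem_edges_of_walk_to_reps {r : Fin n} (hr : p.IsRep r)
    {a b : Quotient p ⊕ Quotient p.transversalPartition}
    (w : (G p).Walk a b) (hb : b = .inr (Quotient.mk _ r)) :
    (∀ C, a = .inl C → C.out ∈ w.edges) ∧
      ∀ x, ¬p.IsRep x → a = .inr (Quotient.mk _ x) → (Quotient.mk p x).out ∈ w.edges := by
  induction w with
  | nil v =>
    subst hb
    refine ⟨fun _ h => (Sum.inr_ne_inl h).elim, fun x hx h => (hx ?_).elim⟩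
    have hrx := Quotient.exact (Sum.inr.inj h)
    rwa [(transversalPartition_rel_iff_eq hx).mp hrx] at hr
  | cons e h w ih =>
    obtain ⟨ih_inl, ih_inr⟩ := ih hb
    refine ⟨?_, ?_⟩
    · rintro C rfl
      obtain ⟨rfl, rfl⟩ := meetingGraph_joins_inl.mp h
      by_cases he : p.IsRep e
      · rw [he]; exact List.mem_cons_self
      · exact List.mem_cons_of_mem _ (ih_inr e he rfl)
    · rintro x hx rfl
      obtain ⟨hex, rfl⟩ := meetingGraph_joins_inr.mp h
      obtain rfl := (transversalPartition_rel_iff_eq hx).mp (Quotient.exact hex)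
      exact List.mem_cons_of_mem _ (ih_inl _ rfl)

theorem nonempty_walk_to_reps {r : Fin n} (hr : p.IsRep r)
    (v : Quotient p ⊕ Quotient p.transversalPartition) :
    Nonempty ((G p).Walk v (.inr (Quotient.mk _ r))) := by
  have to_reps (C : Quotient p) : (G p).Walk (.inl C) (.inr (Quotient.mk _ r)) :=
    .cons C.out (.inl <| by
      simp only [meetingGraph, Quotient.out_eq,
        Quotient.sound (transversalPartition_rel_of_isRep (isRep_out p C) hr)]) (.nil _)
  rcases v with C | D
  · exact ⟨to_reps C⟩
  · induction D using Quotient.inductionOn with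
    | h x => exact ⟨.cons x (.inr rfl) (to_reps _)⟩

theorem orthogonal_transversalPartition (p : Setoid (Fin n)) :
    Orthogonal p p.transversalPartition := by
  refine ⟨acyclic_of_forall_mem_edges fun e u v he w => ?_, fun u v => ?_⟩
  · obtain ⟨rfl, rfl⟩ := Prod.mk.inj he
    by_cases hrep : p.IsRep e
    · have hout := (out_mem_edges_of_walk_to_reps hrep w rfl).1 _ rfl
      rwa [hrep] at hout
    · have hleaf : ∀ e' v, (G p).Joins e' (.inr (Quotient.mk _ e)) v → e' = e := fun e' _ h =>
        (transversalPartition_rel_iff_eq hrep).mp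
          (Quotient.exact (meetingGraph_joins_inr.mp h).1)
      exact Walk.mem_edges_reverse.mp
        (Walk.mem_edges_of_forall_joins_eq hleaf w.reverse Sum.inr_ne_inl)
  · let x : Fin n := u.elim Quotient.out Quotient.out
    exact connected_of_forall_walk_to _ (nonempty_walk_to_reps (isRep_out p ⟦x⟧)) u v

end Construction

theorem exists_orthogonal_general {n : ℕ} :
    (∀ p : Setoid (Fin n), ∃ q : Setoid (Fin n), Orthogonal p q) ∧
      ∀ p : Setoid (Fin n), (orthSet {p}).Nonempty :=
  ⟨fun p => ⟨_, orthogonal_transversalPartition p⟩,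
    fun p => ⟨p.transversalPartition, by
      intro q hq
      rw [Set.mem_singleton_iff.mp hq]
      exact (orthogonal_transversalPartition p).symm⟩⟩

/-- every partition of `Fin n` (`n ≥ 1`) admits an orthogonal
partition; consequently `{p}⊥` is nonempty for every partition `p`. -/
theorem exists_orthogonal {n : ℕ} (hn : 1 ≤ n) :
    (∀ p : Setoid (Fin n), ∃ q : Setoid (Fin n), Orthogonal p q) ∧
      ∀ p : Setoid (Fin n), (orthSet {p}).Nonempty :=
  exists_orthogonal_general
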